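/- Let G* be the star-shaped graph with center of framing -2 and three legs with framings (-3, -3, -2), (-2, -2, -2), and a chain of 103 - k vertices all of framing -2 (for a fixed integer k ≤ 98). Then the intersection matrix Q_{G*} is negative definite for all k with 1 ≤ k ≤ 35. -/

import Mathlib

open Matrix

/-- Framing of the `i`-th vertex of the star-shaped graph `G*` of Figure 4:
vertex `0` is the center with framing `-2`; vertices `1,2,3` form the first leg
with framings `(-3,-3,-2)`; vertices `4,5,6` form the second leg with framings
`(-2,-3,-2)`; the remaining `103-k` vertices form a chain all of framing `-2`. -/
def diagGstar (i : ℕ) : ℤ :=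
  if i = 1 ∨ i = 2 ∨ i = 5 then -3 else -2

/-- Edges of `G*`: each leg is a chain attached to the center, i.e. edges
`{a, a+1}` for `a ∉ {3, 6}` together with `{0,4}` and `{0,7}`. -/
def edgeGstar (a b : ℕ) : Prop :=
  (b = a + 1 ∧ a ≠ 3 ∧ a ≠ 6) ∨ (a = 0 ∧ b = 4) ∨ (a = 0 ∧ b = 7)

instance (a b : ℕ) : Decidable (edgeGstar a b) := by
  unfold edgeGstar; infer_instance

/-- The intersection matrix of `G*` for `-S^3_k(T_{8,13})`; it has `110 - k`
vertices in total (`8` from the center and the first two legs, and `102 - k`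
further ones on the third leg). -/
noncomputable def Qstar (k : ℤ) : Matrix (Fin (110 - k).toNat) (Fin (110 - k).toNat) ℚ :=
  Matrix.of fun i j =>
    if (i : ℕ) = (j : ℕ) then (diagGstar i : ℚ)
    else if edgeGstar i j ∨ edgeGstar j i then 1 else 0


lemma negdef_of_weights {n : ℕ} (M : Matrix (Fin n) (Fin n) ℚ)
    (hsym : ∀ i j, M i j = M j i)
    (hoff : ∀ i j : Fin n, i ≠ j → 0 ≤ M i j)
    (w : Fin n → ℚ) (hw : ∀ i, 0 < w i)
    (hrow : ∀ i, M.mulVec w i < 0) :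
    ∀ v : Fin n → ℚ, v ≠ 0 → v ⬝ᵥ M.mulVec v < 0 := by
  intro v hv
  obtain ⟨i0, hi0⟩ : ∃ i, v i ≠ 0 := by
    by_contra h; push_neg at h; exact hv (funext h)
  have key : v ⬝ᵥ M.mulVec v ≤ ∑ i, M.mulVec w i * (v i)^2 / w i := by
    have expand1 : v ⬝ᵥ M.mulVec v = ∑ i, ∑ j, v i * M i j * v j := by
      simp [dotProduct, Matrix.mulVec, Finset.mul_sum, mul_assoc]
    have expand2 : ∑ i, M.mulVec w i * (v i)^2 / w i
        = ∑ i, ∑ j, M i j * w j * (v i)^2 / w i := by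
      simp only [Matrix.mulVec, dotProduct, Finset.sum_mul, Finset.sum_div]
    rw [expand1, expand2]
    have h2 : ∀ i j : Fin n,
        v i * M i j * v j + v j * M j i * v i
          ≤ M i j * w j * (v i)^2 / w i + M j i * w i * (v j)^2 / w j := by
      intro i j
      by_cases hij : i = j
      · subst hij
        have hwi := (hw i).ne'
        have hq : M i i * w i * (v i)^2 / w i = M i i * (v i)^2 := by
          field_simp
        rw [hq]; ring_nf; rfl
      · have hwi := hw i
        have hwj := hw j
        have hc := hoff i j hij
        have hid : M i j * w j * (v i)^2 / w i + M j i * w i * (v j)^2 / w j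
            - (v i * M i j * v j + v j * M j i * v i)
            = M i j * (v i * w j - v j * w i)^2 / (w i * w j) := by
          rw [← hsym i j]
          field_simp
          ring
        have hpos : 0 ≤ M i j * (v i * w j - v j * w i)^2 / (w i * w j) :=
          div_nonneg (mul_nonneg hc (sq_nonneg _)) (mul_pos hwi hwj).le
        linarith [hid, hpos]
    have hdouble : (2:ℚ) * (∑ i, ∑ j, v i * M i j * v j)
        ≤ 2 * ∑ i, ∑ j, M i j * w j * (v i)^2 / w i := by
      have l1 : (2:ℚ) * (∑ i, ∑ j, v i * M i j * v j)
          = ∑ i, ∑ j, (v i * M i j * v j + v j * M j i * v i) := by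
        simp only [Finset.sum_add_distrib, two_mul]
        congr 1
        rw [Finset.sum_comm]
      have l2 : (2:ℚ) * (∑ i, ∑ j, M i j * w j * (v i)^2 / w i)
          = ∑ i, ∑ j, (M i j * w j * (v i)^2 / w i + M j i * w i * (v j)^2 / w j) := by
        simp only [Finset.sum_add_distrib, two_mul]
        congr 1
        rw [Finset.sum_comm]
      rw [l1, l2]
      exact Finset.sum_le_sum fun i _ => Finset.sum_le_sum fun j _ => h2 i j
    linarith
  have last : ∑ i, M.mulVec w i * (v i)^2 / w i < 0 := by
    have : ∑ i, M.mulVec w i * (v i)^2 / w i < ∑ _i : Fin n, (0:ℚ) := by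
      apply Finset.sum_lt_sum
      · intro i _
        exact div_nonpos_of_nonpos_of_nonneg
          (mul_nonpos_of_nonpos_of_nonneg (hrow i).le (sq_nonneg _)) (hw i).le
      · exact ⟨i0, Finset.mem_univ _,
          div_neg_of_neg_of_pos
            (mul_neg_of_neg_of_pos (hrow i0) (by positivity)) (hw i0)⟩
    simpa using this
  linarith

noncomputable def Mc (n : ℕ) : ℚ :=
  ((((n:ℚ)-7)*((n:ℚ)+19993) + 10)/103 + (((n:ℚ)-7)*((n:ℚ)+19993) + 20001)/104)/2
noncomputable def W (n m : ℕ) : ℚ :=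
  if m = 0 then 104 * Mc n
  else if m = 1 then 40 * Mc n + 5
  else if m = 2 then 16 * Mc n + 8
  else if m = 3 then 8 * Mc n + 5
  else if m = 4 then 65 * Mc n + 5
  else if m = 5 then 26 * Mc n + 8
  else if m = 6 then 13 * Mc n + 5
  else ((n:ℚ) - (m:ℚ)) * ((n:ℚ) + (m:ℚ) + 19986)
lemma W_big (n m : ℕ) (hm : 7 ≤ m) :
    W n m = ((n:ℚ) - (m:ℚ)) * ((n:ℚ) + (m:ℚ) + 19986) := by
  unfold W
  rw [if_neg (by omega), if_neg (by omega), if_neg (by omega), if_neg (by omega),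
    if_neg (by omega), if_neg (by omega), if_neg (by omega)]
lemma Mc_pos (n : ℕ) (hn : 75 ≤ n) : 0 < Mc n := by
  have hq : (75:ℚ) ≤ (n:ℚ) := by exact_mod_cast hn
  unfold Mc
  nlinarith

lemma W_pos (n : ℕ) (hn : 75 ≤ n) (m : ℕ) (hm : m < n) : 0 < W n m := by
  have hq : (75:ℚ) ≤ (n:ℚ) := by exact_mod_cast hn
  have hMc := Mc_pos n hn
  have hmq : (m:ℚ) + 1 ≤ (n:ℚ) := by exact_mod_cast hm
  unfold W
  split_ifs <;> nlinarith

lemma sum_pt {n : ℕ} (f : Fin n → ℚ) (p : Fin n → Prop) [DecidablePred p]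
    (a : ℕ) (ha : a < n) (hp : ∀ j : Fin n, p j ↔ (j : ℕ) = a) :
    (∑ j : Fin n, if p j then f j else 0) = f ⟨a, ha⟩ := by
  rw [Finset.sum_eq_single (⟨a, ha⟩ : Fin n)]
  · rw [if_pos ((hp _).mpr rfl)]
  · intro j _ hj
    rw [if_neg]
    exact fun h => hj (Fin.ext ((hp j).mp h))
  · intro h; exact absurd (Finset.mem_univ _) h
lemma sum_no {n : ℕ} (f : Fin n → ℚ) (p : Fin n → Prop) [DecidablePred p]
    (hp : ∀ j : Fin n, ¬ p j) :
    (∑ j : Fin n, if p j then f j else 0) = 0 :=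
  Finset.sum_eq_zero fun j _ => if_neg (hp j)
lemma entry_nat (a b : ℕ) (d x : ℚ) :
    (if a = b then d else if edgeGstar a b ∨ edgeGstar b a then 1 else 0) * x =
      (if a = b then d * x else 0)
    + (if (b = a + 1 ∧ a ≠ 3 ∧ a ≠ 6) then x else 0)
    + (if (a = 0 ∧ b = 4) then x else 0)
    + (if (a = 0 ∧ b = 7) then x else 0)
    + (if (a = b + 1 ∧ b ≠ 3 ∧ b ≠ 6) then x else 0)
    + (if (b = 0 ∧ a = 4) then x else 0)
    + (if (b = 0 ∧ a = 7) then x else 0) := by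
  unfold edgeGstar
  by_cases h1 : a = b
  · rw [if_pos h1, if_pos h1, if_neg (by omega), if_neg (by omega), if_neg (by omega),
      if_neg (by omega), if_neg (by omega), if_neg (by omega)]
    ring
  · rw [if_neg h1, if_neg h1]
    by_cases e1 : b = a + 1 ∧ a ≠ 3 ∧ a ≠ 6
    · rw [if_pos (Or.inl (Or.inl e1)), if_pos e1, if_neg (by omega), if_neg (by omega),
        if_neg (by omega), if_neg (by omega), if_neg (by omega)]
      ring
    · rw [if_neg e1]
      by_cases e2 : a = 0 ∧ b = 4
      · rw [if_pos (Or.inl (Or.inr (Or.inl e2))), if_pos e2, if_neg (by omega),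
          if_neg (by omega), if_neg (by omega), if_neg (by omega)]
        ring
      · rw [if_neg e2]
        by_cases e3 : a = 0 ∧ b = 7
        · rw [if_pos (Or.inl (Or.inr (Or.inr e3))), if_pos e3, if_neg (by omega),
            if_neg (by omega), if_neg (by omega)]
          ring
        · rw [if_neg e3]
          by_cases e4 : a = b + 1 ∧ b ≠ 3 ∧ b ≠ 6
          · rw [if_pos (Or.inr (Or.inl e4)), if_pos e4, if_neg (by omega),
              if_neg (by omega)]
            ring
          · rw [if_neg e4]
            by_cases e5 : b = 0 ∧ a = 4
            · rw [if_pos (Or.inr (Or.inr (Or.inl e5))), if_pos e5, if_neg (by omega)]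
              ring
            · rw [if_neg e5]
              by_cases e6 : b = 0 ∧ a = 7
              · rw [if_pos (Or.inr (Or.inr (Or.inr e6))), if_pos e6]
                ring
              · rw [if_neg (by tauto), if_neg e6]
                ring

lemma entry_split (k : ℤ) (i j : Fin (110 - k).toNat) (x : ℚ) :
    Qstar k i j * x =
      (if (i : ℕ) = (j : ℕ) then (diagGstar i : ℚ) * x else 0)
    + (if ((j : ℕ) = (i : ℕ) + 1 ∧ (i : ℕ) ≠ 3 ∧ (i : ℕ) ≠ 6) then x else 0)
    + (if ((i : ℕ) = 0 ∧ (j : ℕ) = 4) then x else 0)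
    + (if ((i : ℕ) = 0 ∧ (j : ℕ) = 7) then x else 0)
    + (if ((i : ℕ) = (j : ℕ) + 1 ∧ (j : ℕ) ≠ 3 ∧ (j : ℕ) ≠ 6) then x else 0)
    + (if ((j : ℕ) = 0 ∧ (i : ℕ) = 4) then x else 0)
    + (if ((j : ℕ) = 0 ∧ (i : ℕ) = 7) then x else 0) :=
  entry_nat (i : ℕ) (j : ℕ) (diagGstar (i : ℕ) : ℚ) x

lemma row_neg (k : ℤ) (h1 : 1 ≤ k) (h2 : k ≤ 35) (i : Fin (110 - k).toNat) :
    (Qstar k).mulVec (fun j => W (110 - k).toNat (j : ℕ)) i < 0 := by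
  have hn75 : 75 ≤ (110 - k).toNat := by omega
  have hq75 : (75:ℚ) ≤ ((110 - k).toNat : ℚ) := by exact_mod_cast hn75
  have hn109 : (110 - k).toNat ≤ 109 := by omega
  have hq109 : ((110 - k).toNat : ℚ) ≤ 109 := by exact_mod_cast hn109
  have hend : (0:ℚ) ≤ (((110 - k).toNat : ℚ) - 75) * (109 - ((110 - k).toNat : ℚ)) := by
    nlinarith
  have hexp : (Qstar k).mulVec (fun j => W (110 - k).toNat (j : ℕ)) i
      = ∑ j, Qstar k i j * W (110 - k).toNat (j : ℕ) := by
    simp [Matrix.mulVec, dotProduct]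
  rw [hexp]
  simp only [entry_split k i]
  simp only [Finset.sum_add_distrib]
  obtain h0 | h1' | h2' | h3 | h4 | h5 | h6 | h7 | h8 :
      (i:ℕ) = 0 ∨ (i:ℕ) = 1 ∨ (i:ℕ) = 2 ∨ (i:ℕ) = 3 ∨ (i:ℕ) = 4 ∨ (i:ℕ) = 5
      ∨ (i:ℕ) = 6 ∨ (i:ℕ) = 7 ∨ 8 ≤ (i:ℕ) := by omega
  · rw [sum_pt _ _ 0 (by omega) (fun j => by omega),
        sum_pt _ _ 1 (by omega) (fun j => by omega),
        sum_pt _ _ 4 (by omega) (fun j => by omega),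
        sum_pt _ _ 7 (by omega) (fun j => by omega),
        sum_no _ _ (fun j => by omega),
        sum_no _ _ (fun j => by omega),
        sum_no _ _ (fun j => by omega)]
    simp only [h0]
    norm_num [diagGstar, W, Mc]
    nlinarith [hend]
  · rw [sum_pt _ _ 1 (by omega) (fun j => by omega),
        sum_pt _ _ 2 (by omega) (fun j => by omega),
        sum_no _ _ (fun j => by omega),
        sum_no _ _ (fun j => by omega),
        sum_pt _ _ 0 (by omega) (fun j => by omega),
        sum_no _ _ (fun j => by omega),
        sum_no _ _ (fun j => by omega)]
    simp only [h1']
    norm_num [diagGstar, W, Mc]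
    nlinarith [hend]
  · rw [sum_pt _ _ 2 (by omega) (fun j => by omega),
        sum_pt _ _ 3 (by omega) (fun j => by omega),
        sum_no _ _ (fun j => by omega),
        sum_no _ _ (fun j => by omega),
        sum_pt _ _ 1 (by omega) (fun j => by omega),
        sum_no _ _ (fun j => by omega),
        sum_no _ _ (fun j => by omega)]
    simp only [h2']
    norm_num [diagGstar, W, Mc]
    nlinarith [hend]
  · rw [sum_pt _ _ 3 (by omega) (fun j => by omega),
        sum_no _ _ (fun j => by omega),
        sum_no _ _ (fun j => by omega),
        sum_no _ _ (fun j => by omega),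
        sum_pt _ _ 2 (by omega) (fun j => by omega),
        sum_no _ _ (fun j => by omega),
        sum_no _ _ (fun j => by omega)]
    simp only [h3]
    norm_num [diagGstar, W, Mc]
    nlinarith [hend]
  · rw [sum_pt _ _ 4 (by omega) (fun j => by omega),
        sum_pt _ _ 5 (by omega) (fun j => by omega),
        sum_no _ _ (fun j => by omega),
        sum_no _ _ (fun j => by omega),
        sum_no _ _ (fun j => by omega),
        sum_pt _ _ 0 (by omega) (fun j => by omega),
        sum_no _ _ (fun j => by omega)]
    simp only [h4]
    norm_num [diagGstar, W, Mc]
    nlinarith [hend]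
  · rw [sum_pt _ _ 5 (by omega) (fun j => by omega),
        sum_pt _ _ 6 (by omega) (fun j => by omega),
        sum_no _ _ (fun j => by omega),
        sum_no _ _ (fun j => by omega),
        sum_pt _ _ 4 (by omega) (fun j => by omega),
        sum_no _ _ (fun j => by omega),
        sum_no _ _ (fun j => by omega)]
    simp only [h5]
    norm_num [diagGstar, W, Mc]
    nlinarith [hend]
  · rw [sum_pt _ _ 6 (by omega) (fun j => by omega),
        sum_no _ _ (fun j => by omega),
        sum_no _ _ (fun j => by omega),
        sum_no _ _ (fun j => by omega),
        sum_pt _ _ 5 (by omega) (fun j => by omega),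
        sum_no _ _ (fun j => by omega),
        sum_no _ _ (fun j => by omega)]
    simp only [h6]
    norm_num [diagGstar, W, Mc]
    nlinarith [hend]
  · rw [sum_pt _ _ 7 (by omega) (fun j => by omega),
        sum_pt _ _ 8 (by omega) (fun j => by omega),
        sum_no _ _ (fun j => by omega),
        sum_no _ _ (fun j => by omega),
        sum_no _ _ (fun j => by omega),
        sum_no _ _ (fun j => by omega),
        sum_pt _ _ 0 (by omega) (fun j => by omega)]
    simp only [h7]
    norm_num [diagGstar, W, Mc]
    nlinarith [hend]
  · -- generic chain case: 8 ≤ i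
    have hd : (diagGstar (i:ℕ) : ℚ) = -2 := by
      unfold diagGstar; rw [if_neg (by omega)]; norm_num
    have hiq : ((i:ℕ):ℚ) + 1 ≤ ((110 - k).toNat : ℚ) := by exact_mod_cast i.isLt
    have h8q : (8:ℚ) ≤ ((i:ℕ):ℚ) := by exact_mod_cast h8
    by_cases hlast : (i:ℕ) + 1 < (110 - k).toNat
    · rw [sum_pt _ _ (i:ℕ) i.isLt (fun j => by omega),
          sum_pt _ _ ((i:ℕ)+1) (by omega) (fun j => by omega),
          sum_no _ _ (fun j => by omega),
          sum_no _ _ (fun j => by omega),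
          sum_pt _ _ ((i:ℕ)-1) (by omega) (fun j => by omega),
          sum_no _ _ (fun j => by omega),
          sum_no _ _ (fun j => by omega)]
      simp only [Fin.val_mk]
      rw [hd, W_big _ _ (by omega), W_big _ _ (by omega), W_big _ _ (by omega)]
      have hc : ((((i:ℕ) - 1 : ℕ)):ℚ) = ((i:ℕ):ℚ) - 1 := by
        have h1i : (1:ℕ) ≤ (i:ℕ) := by omega
        push_cast [Nat.cast_sub h1i]
        ring
      push_cast [hc]
      nlinarith []
    · rw [sum_pt _ _ (i:ℕ) i.isLt (fun j => by omega),
          sum_no _ _ (fun j => by have := j.isLt; omega),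
          sum_no _ _ (fun j => by omega),
          sum_no _ _ (fun j => by omega),
          sum_pt _ _ ((i:ℕ)-1) (by omega) (fun j => by omega),
          sum_no _ _ (fun j => by omega),
          sum_no _ _ (fun j => by omega)]
      simp only [Fin.val_mk]
      rw [hd, W_big _ _ (by omega), W_big _ _ (by omega)]
      have hc : ((((i:ℕ) - 1 : ℕ)):ℚ) = ((i:ℕ):ℚ) - 1 := by
        have h1i : (1:ℕ) ≤ (i:ℕ) := by omega
        push_cast [Nat.cast_sub h1i]
        ring
      have hqq : (((110 - k).toNat):ℚ) = ((i:ℕ):ℚ) + 1 := by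
        have hnn : (110 - k).toNat = (i:ℕ) + 1 := by omega
        exact_mod_cast hnn
      push_cast [hc]
      nlinarith [hqq]

theorem stmt_9 (k : ℤ) (h1 : 1 ≤ k) (h2 : k ≤ 35) :
    ∀ v : Fin (110 - k).toNat → ℚ, v ≠ 0 → v ⬝ᵥ (Qstar k).mulVec v < 0 := by
  have hn75 : 75 ≤ (110 - k).toNat := by omega
  refine negdef_of_weights (Qstar k) ?_ ?_ (fun j => W (110 - k).toNat (j : ℕ)) ?_ ?_
  · intro i j
    unfold Qstar
    simp only [Matrix.of_apply]
    by_cases h : (i : ℕ) = (j : ℕ)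
    · rw [if_pos h, if_pos h.symm, h]
    · rw [if_neg h, if_neg (Ne.symm h)]
      exact if_congr or_comm rfl rfl
  · intro i j hij
    unfold Qstar
    simp only [Matrix.of_apply]
    rw [if_neg (fun h => hij (Fin.ext h))]
    split_ifs <;> norm_num
  · intro j
    exact W_pos _ hn75 _ j.isLt
  · intro i
    exact row_neg k h1 h2 i
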